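/- Let q = q₁q₂ with gcd(q₁,q₂) = 1, let b ∈ ℤ⁴, and for j = 1,2,3 let χ_{j,1} be a Dirichlet character modulo q₁ and χ_{j,2} a Dirichlet character modulo q₂, and let χ_j denote the Dirichlet character modulo q obtained as the product of χ_{j,1} and χ_{j,2}. Then B(q, b; χ₁, χ₂, χ₃) = B(q₁, b; χ_{1,1}, χ_{2,1}, χ_{3,1}) · B(q₂, b; χ_{1,2}, χ_{2,2}, χ_{3,2}). -/

import Mathlib

/-!
Everything splits along the Chinese remainder isomorphism `ZMod (q₁ q₂) ≃ ZMod q₁ × ZMod q₂`,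
`x ↦ (x₁, x₂)`. The product character becomes `χ_{j,1}(x₁) χ_{j,2}(x₂)`, and with
`c₁ = q₂⁻¹ mod q₁`, `c₂ = q₁⁻¹ mod q₂` the additive character becomes
`e_q(x) = e_{q₁}(c₁ x₁) e_{q₂}(c₂ x₂)`, because `c₁ q₂ + c₂ q₁ ≡ 1 (mod q)`. Hence
`S(χ_j, a) = S(χ_{j,1}, c₁ a) S(χ_{j,2}, c₂ a)`, and the summand of `B` at a unit `a` is the
product of the summands at `c₁ a₁` and `c₂ a₂`. As `a` runs over the units mod `q`, the pair
`(c₁ a₁, c₂ a₂)` runs over all pairs of units, and `φ` is multiplicative.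
-/
/-- `S(χ,a) = ∑_{h=1}^{q} conj(χ)(h) e_q(a h²)` for a Dirichlet character χ mod q. -/
noncomputable def Schar {q : ℕ} (χ : DirichletCharacter ℂ q) (a : ℤ) : ℂ :=
  ∑ h ∈ Finset.Icc 1 q,
    (starRingEnd ℂ) (χ (h : ZMod q)) *
      Complex.exp (2 * (Real.pi : ℂ) * Complex.I * ((a : ℂ) * (h : ℂ) ^ 2) / (q : ℂ))

/-- `B(q, (b₁,b₂,b₃,b₄); χ₁, χ₂, χ₃)
  = φ(q)⁻³ ∑_{1 ≤ a ≤ q, gcd(a,q)=1} S(χ₁,ab₁) S(χ₂,ab₂) S(χ₃,ab₃) e_q(−ab₄)`. -/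
noncomputable def Bsum (q : ℕ) (b₁ b₂ b₃ b₄ : ℤ) (χ₁ χ₂ χ₃ : DirichletCharacter ℂ q) : ℂ :=
  ((q.totient : ℂ))⁻¹ ^ 3 *
    ∑ a ∈ (Finset.Icc 1 q).filter (fun a => Nat.gcd a q = 1),
      Schar χ₁ ((a : ℤ) * b₁) * Schar χ₂ ((a : ℤ) * b₂) * Schar χ₃ ((a : ℤ) * b₃) *
        Complex.exp (-(2 * (Real.pi : ℂ) * Complex.I * ((a : ℂ) * (b₄ : ℂ)) / (q : ℂ)))

open Finset

namespace ZMod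

variable {M : Type*} [AddCommMonoid M] {q : ℕ} [NeZero q]

theorem sum_Icc_natCast (f : ZMod q → M) : ∑ h ∈ Icc 1 q, f h = ∑ x, f x := by
  refine sum_nbij' (↑) (fun x => if x = 0 then q else x.val) (by simp) ?_ ?_ ?_ (by simp)
  · intro x _
    split_ifs with hx
    · simpa using NeZero.one_le
    · simpa [Nat.one_le_iff_ne_zero, (val_lt x).le] using hx
  · intro h hh
    rw [mem_Icc] at hh
    split_ifs with h0
    · exact (Nat.le_antisymm hh.2 (Nat.le_of_dvd hh.1 ((natCast_eq_zero_iff h q).1 h0))).symm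
    · refine val_cast_of_lt (hh.2.lt_of_ne ?_)
      rintro rfl
      exact h0 (natCast_self _)
  · intro x _
    split_ifs with hx <;> simp [hx]

theorem sum_units_eq_sum_isUnit (f : ZMod q → M) :
    ∑ u : (ZMod q)ˣ, f u = ∑ x with IsUnit x, f x := by
  rw [← sum_image (fun u _ v _ => Units.ext)]
  refine sum_congr ?_ fun _ _ => rfl
  ext x
  simp only [mem_image, mem_univ, true_and, mem_filter]
  exact Iff.rfl

theorem sum_Icc_coprime_natCast (f : ZMod q → M) :
    ∑ a ∈ Icc 1 q with a.gcd q = 1, f a = ∑ u : (ZMod q)ˣ, f u := by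
  rw [sum_units_eq_sum_isUnit, sum_filter, sum_filter,
    ← sum_Icc_natCast fun x => if IsUnit x then f x else 0]
  simp_rw [isUnit_iff_coprime]

theorem sum_units_mul_left (f : ZMod q → M) {c : ZMod q} (hc : IsUnit c) :
    ∑ u : (ZMod q)ˣ, f (c * u) = ∑ u : (ZMod q)ˣ, f u :=
  Equiv.sum_comp (Equiv.mulLeft hc.unit) (fun u => f u)

theorem stdAddChar_cast_of_mul_eq {d k N : ℕ} [NeZero d] [NeZero N] (h : d * k = N)
    (x : ZMod N) : stdAddChar (cast x : ZMod d) = stdAddChar ((k : ZMod N) * x) := by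
  subst h
  obtain ⟨j, rfl⟩ := intCast_surjective x
  rw [cast_intCast (dvd_mul_right d k), ← Int.cast_natCast, ← Int.cast_mul, stdAddChar_coe,
    stdAddChar_coe]
  have : (k : ℂ) ≠ 0 := Nat.cast_ne_zero.2 (right_ne_zero_of_mul (NeZero.ne (d * k)))
  push_cast
  field_simp

variable {m n : ℕ}

theorem chineseRemainder_apply (h : m.Coprime n) (x : ZMod (m * n)) :
    chineseRemainder h x = (cast x, cast x) :=
  Prod.ext (Prod.fst_zmod_cast x) (Prod.snd_zmod_cast x)

theorem isUnit_iff_isUnit_cast_and_isUnit_cast (h : m.Coprime n) (x : ZMod (m * n)) :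
    IsUnit x ↔ IsUnit (cast x : ZMod m) ∧ IsUnit (cast x : ZMod n) := by
  rw [← isUnit_map_iff (chineseRemainder h), chineseRemainder_apply, Prod.isUnit_iff]

theorem isUnit_inv_natCast (h : m.Coprime n) : IsUnit (n : ZMod m)⁻¹ := by
  rw [← coe_unitOfCoprime n h.symm, inv_coe_unit]
  exact Units.isUnit _

variable [NeZero m] [NeZero n]

theorem stdAddChar_eq_mul_of_add_eq_one {c₁ c₂ : ℤ} (hc : c₁ * n + c₂ * m = 1)
    (x : ZMod (m * n)) :
    stdAddChar x = stdAddChar (c₁ * cast x : ZMod m) * stdAddChar (c₂ * cast x : ZMod n) := by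
  have hx : x = n * (c₁ * x) + m * (c₂ * x) := by
    calc x = ((c₁ * n + c₂ * m : ℤ) : ZMod (m * n)) * x := by rw [hc, Int.cast_one, one_mul]
      _ = n * (c₁ * x) + m * (c₂ * x) := by push_cast; ring
  rw [← cast_intCast (R := ZMod m) (dvd_mul_right m n),
    ← cast_intCast (R := ZMod n) (dvd_mul_left n m), ← cast_mul (dvd_mul_right m n),
    ← cast_mul (dvd_mul_left n m), stdAddChar_cast_of_mul_eq rfl,
    stdAddChar_cast_of_mul_eq (mul_comm n m), ← AddChar.map_add_eq_mul, ← hx]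

theorem stdAddChar_eq_mul_of_coprime (h : m.Coprime n) (x : ZMod (m * n)) :
    stdAddChar x
      = stdAddChar ((n : ZMod m)⁻¹ * cast x) * stdAddChar ((m : ZMod n)⁻¹ * cast x) := by
  obtain ⟨c₁, c₂, hc⟩ := Nat.isCoprime_iff_coprime.2 h.symm
  have hc₁ : (n : ZMod m)⁻¹ = c₁ := by
    refine ZMod.inv_eq_of_mul_eq_one _ _ _ ?_
    simpa [mul_comm] using congrArg (Int.cast : ℤ → ZMod m) hc
  have hc₂ : (m : ZMod n)⁻¹ = c₂ := by
    refine ZMod.inv_eq_of_mul_eq_one _ _ _ ?_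
    simpa [mul_comm] using congrArg (Int.cast : ℤ → ZMod n) hc
  rw [hc₁, hc₂, stdAddChar_eq_mul_of_add_eq_one hc]

variable {R : Type*} [CommSemiring R]

theorem sum_mul_sum_eq_sum_cast (h : m.Coprime n) (f : ZMod m → R) (g : ZMod n → R) :
    (∑ x, f x) * (∑ y, g y) = ∑ z : ZMod (m * n), f (cast z) * g (cast z) := by
  rw [Fintype.sum_mul_sum, ← Fintype.sum_prod_type', ← (chineseRemainder h).toEquiv.sum_comp]
  simp [chineseRemainder_apply]

theorem sum_units_mul_sum_units_eq_sum_cast (h : m.Coprime n) (f : ZMod m → R) (g : ZMod n → R) :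
    (∑ u : (ZMod m)ˣ, f u) * (∑ u : (ZMod n)ˣ, g u)
      = ∑ u : (ZMod (m * n))ˣ, f (cast (u : ZMod (m * n))) * g (cast (u : ZMod (m * n))) := by
  rw [Fintype.sum_mul_sum, ← Fintype.sum_prod_type',
    ← ((Units.mapEquiv (chineseRemainder h).toMulEquiv).trans MulEquiv.prodUnits).sum_comp]
  simp [MulEquiv.prodUnits, chineseRemainder_apply]

end ZMod

namespace DirichletCharacter

variable {R : Type*} [CommMonoidWithZero R] {m n : ℕ}

theorem changeLevel_mul_changeLevel_apply (h : m.Coprime n) (χ₁ : DirichletCharacter R m)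
    (χ₂ : DirichletCharacter R n) (x : ZMod (m * n)) :
    (changeLevel (dvd_mul_right m n) χ₁ * changeLevel (dvd_mul_left n m) χ₂) x
      = χ₁ (ZMod.cast x) * χ₂ (ZMod.cast x) := by
  rw [MulChar.mul_apply]
  by_cases hx : IsUnit x
  · lift x to (ZMod (m * n))ˣ using hx
    rw [changeLevel_eq_cast_of_dvd, changeLevel_eq_cast_of_dvd]
  · rw [MulChar.map_nonunit _ hx, zero_mul]
    rw [ZMod.isUnit_iff_isUnit_cast_and_isUnit_cast h, not_and_or] at hx
    rcases hx with hx | hx <;> simp [MulChar.map_nonunit _ hx]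

end DirichletCharacter

open ZMod DirichletCharacter ComplexConjugate

variable {q m n : ℕ}

noncomputable def quadGaussSum [NeZero q] (χ : DirichletCharacter ℂ q) (v : ZMod q) : ℂ :=
  ∑ x, conj (χ x) * stdAddChar (v * x ^ 2)

noncomputable def Bsummand [NeZero q] (b₁ b₂ b₃ b₄ : ℤ) (χ₁ χ₂ χ₃ : DirichletCharacter ℂ q)
    (w : ZMod q) : ℂ :=
  quadGaussSum χ₁ (w * b₁) * quadGaussSum χ₂ (w * b₂) * quadGaussSum χ₃ (w * b₃) *
    stdAddChar (-(w * b₄) : ZMod q)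

theorem Schar_eq_quadGaussSum [NeZero q] (χ : DirichletCharacter ℂ q) (a : ℤ) :
    Schar χ a = quadGaussSum χ a := by
  rw [Schar, quadGaussSum, ← sum_Icc_natCast]
  refine sum_congr rfl fun h _ => ?_
  have : (a : ZMod q) * (h : ZMod q) ^ 2 = ((a * (h : ℤ) ^ 2 : ℤ) : ZMod q) := by push_cast; ring
  rw [this, stdAddChar_coe]
  push_cast
  ring

theorem Bsum_eq_sum_units [NeZero q] (b₁ b₂ b₃ b₄ : ℤ) (χ₁ χ₂ χ₃ : DirichletCharacter ℂ q) :
    Bsum q b₁ b₂ b₃ b₄ χ₁ χ₂ χ₃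
      = (q.totient : ℂ)⁻¹ ^ 3 * ∑ u : (ZMod q)ˣ, Bsummand b₁ b₂ b₃ b₄ χ₁ χ₂ χ₃ u := by
  rw [Bsum, ← sum_Icc_coprime_natCast]
  refine congrArg _ (sum_congr rfl fun a _ => ?_)
  have : -((a : ZMod q) * b₄) = ((-(a * b₄) : ℤ) : ZMod q) := by push_cast; ring
  simp only [Bsummand, Schar_eq_quadGaussSum, this, stdAddChar_coe]
  push_cast
  congr 2
  ring

theorem quadGaussSum_changeLevel_mul [NeZero m] [NeZero n] (h : m.Coprime n)
    (χ₁ : DirichletCharacter ℂ m) (χ₂ : DirichletCharacter ℂ n) (v : ZMod (m * n)) :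
    quadGaussSum (changeLevel (dvd_mul_right m n) χ₁ * changeLevel (dvd_mul_left n m) χ₂) v
      = quadGaussSum χ₁ ((n : ZMod m)⁻¹ * cast v) * quadGaussSum χ₂ ((m : ZMod n)⁻¹ * cast v) := by
  rw [quadGaussSum, quadGaussSum, quadGaussSum, sum_mul_sum_eq_sum_cast h]
  refine Fintype.sum_congr _ _ fun x => ?_
  rw [changeLevel_mul_changeLevel_apply h, stdAddChar_eq_mul_of_coprime h, map_mul,
    cast_mul (dvd_mul_right m n), cast_mul (dvd_mul_left n m), cast_pow (dvd_mul_right m n),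
    cast_pow (dvd_mul_left n m), ← mul_assoc (n : ZMod m)⁻¹, ← mul_assoc (m : ZMod n)⁻¹]
  exact mul_mul_mul_comm _ _ _ _

theorem Bsummand_changeLevel_mul [NeZero m] [NeZero n] (h : m.Coprime n) (b₁ b₂ b₃ b₄ : ℤ)
    (χ₁₁ χ₂₁ χ₃₁ : DirichletCharacter ℂ m) (χ₁₂ χ₂₂ χ₃₂ : DirichletCharacter ℂ n)
    (w : ZMod (m * n)) :
    Bsummand b₁ b₂ b₃ b₄
      (changeLevel (dvd_mul_right m n) χ₁₁ * changeLevel (dvd_mul_left n m) χ₁₂)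
      (changeLevel (dvd_mul_right m n) χ₂₁ * changeLevel (dvd_mul_left n m) χ₂₂)
      (changeLevel (dvd_mul_right m n) χ₃₁ * changeLevel (dvd_mul_left n m) χ₃₂) w
      = Bsummand b₁ b₂ b₃ b₄ χ₁₁ χ₂₁ χ₃₁ ((n : ZMod m)⁻¹ * cast w) *
        Bsummand b₁ b₂ b₃ b₄ χ₁₂ χ₂₂ χ₃₂ ((m : ZMod n)⁻¹ * cast w) := by
  simp only [Bsummand, quadGaussSum_changeLevel_mul h, stdAddChar_eq_mul_of_coprime h (-(w * b₄)),
    cast_neg (dvd_mul_right m n), cast_neg (dvd_mul_left n m), cast_mul (dvd_mul_right m n),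
    cast_mul (dvd_mul_left n m), cast_intCast (dvd_mul_right m n), cast_intCast (dvd_mul_left n m)]
  ring_nf

theorem sum_units_Bsummand_changeLevel_mul [NeZero m] [NeZero n] (h : m.Coprime n)
    (b₁ b₂ b₃ b₄ : ℤ)
    (χ₁₁ χ₂₁ χ₃₁ : DirichletCharacter ℂ m) (χ₁₂ χ₂₂ χ₃₂ : DirichletCharacter ℂ n) :
    ∑ u : (ZMod (m * n))ˣ, Bsummand b₁ b₂ b₃ b₄
      (changeLevel (dvd_mul_right m n) χ₁₁ * changeLevel (dvd_mul_left n m) χ₁₂)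
      (changeLevel (dvd_mul_right m n) χ₂₁ * changeLevel (dvd_mul_left n m) χ₂₂)
      (changeLevel (dvd_mul_right m n) χ₃₁ * changeLevel (dvd_mul_left n m) χ₃₂) u
      = (∑ u : (ZMod m)ˣ, Bsummand b₁ b₂ b₃ b₄ χ₁₁ χ₂₁ χ₃₁ u) *
        ∑ u : (ZMod n)ˣ, Bsummand b₁ b₂ b₃ b₄ χ₁₂ χ₂₂ χ₃₂ u := by
  rw [← sum_units_mul_left _ (isUnit_inv_natCast h),
    ← sum_units_mul_left _ (isUnit_inv_natCast h.symm), sum_units_mul_sum_units_eq_sum_cast h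
      (fun x => Bsummand b₁ b₂ b₃ b₄ χ₁₁ χ₂₁ χ₃₁ ((n : ZMod m)⁻¹ * x))
      (fun x => Bsummand b₁ b₂ b₃ b₄ χ₁₂ χ₂₂ χ₃₂ ((m : ZMod n)⁻¹ * x))]
  simp only [Bsummand_changeLevel_mul h]

theorem Bsum_multiplicative_general (q₁ q₂ : ℕ)
    (hco : Nat.Coprime q₁ q₂) (b₁ b₂ b₃ b₄ : ℤ)
    (χ₁₁ χ₂₁ χ₃₁ : DirichletCharacter ℂ q₁) (χ₁₂ χ₂₂ χ₃₂ : DirichletCharacter ℂ q₂) :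
    Bsum (q₁ * q₂) b₁ b₂ b₃ b₄
      (DirichletCharacter.changeLevel (dvd_mul_right q₁ q₂) χ₁₁ *
        DirichletCharacter.changeLevel (dvd_mul_left q₂ q₁) χ₁₂)
      (DirichletCharacter.changeLevel (dvd_mul_right q₁ q₂) χ₂₁ *
        DirichletCharacter.changeLevel (dvd_mul_left q₂ q₁) χ₂₂)
      (DirichletCharacter.changeLevel (dvd_mul_right q₁ q₂) χ₃₁ *
        DirichletCharacter.changeLevel (dvd_mul_left q₂ q₁) χ₃₂)
      = Bsum q₁ b₁ b₂ b₃ b₄ χ₁₁ χ₂₁ χ₃₁ * Bsum q₂ b₁ b₂ b₃ b₄ χ₁₂ χ₂₂ χ₃₂ := by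
  -- a zero modulus makes `Icc 1 0` empty, and both sides vanish
  obtain rfl | hq₁ := q₁.eq_zero_or_pos
  · simp [Bsum]
  obtain rfl | hq₂ := q₂.eq_zero_or_pos
  · simp [Bsum]
  have := NeZero.of_pos hq₁
  have := NeZero.of_pos hq₂
  rw [Bsum_eq_sum_units, Bsum_eq_sum_units, Bsum_eq_sum_units,
    sum_units_Bsummand_changeLevel_mul hco, Nat.totient_mul hco]
  push_cast
  ring

/-- Multiplicativity of `B`: if q = q₁q₂ with gcd(q₁,q₂) = 1 and each χ_j is the product of
characters χ_{j,1} mod q₁ and χ_{j,2} mod q₂, then B factors accordingly. -/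
theorem Bsum_multiplicative (q₁ q₂ : ℕ) (hq₁ : 0 < q₁) (hq₂ : 0 < q₂)
    (hco : Nat.Coprime q₁ q₂) (b₁ b₂ b₃ b₄ : ℤ)
    (χ₁₁ χ₂₁ χ₃₁ : DirichletCharacter ℂ q₁) (χ₁₂ χ₂₂ χ₃₂ : DirichletCharacter ℂ q₂) :
    Bsum (q₁ * q₂) b₁ b₂ b₃ b₄
      (DirichletCharacter.changeLevel (dvd_mul_right q₁ q₂) χ₁₁ *
        DirichletCharacter.changeLevel (dvd_mul_left q₂ q₁) χ₁₂)
      (DirichletCharacter.changeLevel (dvd_mul_right q₁ q₂) χ₂₁ *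
        DirichletCharacter.changeLevel (dvd_mul_left q₂ q₁) χ₂₂)
      (DirichletCharacter.changeLevel (dvd_mul_right q₁ q₂) χ₃₁ *
        DirichletCharacter.changeLevel (dvd_mul_left q₂ q₁) χ₃₂)
      = Bsum q₁ b₁ b₂ b₃ b₄ χ₁₁ χ₂₁ χ₃₁ * Bsum q₂ b₁ b₂ b₃ b₄ χ₁₂ χ₂₂ χ₃₂ :=
  Bsum_multiplicative_general q₁ q₂ hco b₁ b₂ b₃ b₄ χ₁₁ χ₂₁ χ₃₁ χ₁₂ χ₂₂ χ₃₂
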